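/- Let ρ_Ψ and ρ_Φ be n×n Hermitian matrices with eigenvalues in [0,1] and equal trace. If λ(ρ_Ψ) ≺ λ(ρ_Φ) (decreasingly sorted eigenvalues), then λ(D_Ψ) ≺ λ(D_Φ), where D = ρ ⊕ (I − ρᵀ) is the extended 2n×2n matrix with spectrum (λ(ρ), 1−λ(ρ)). -/

import Mathlib

/-!
The spectrum of `D = ρ ⊕ (1 - ρᵀ)` is the multiset `λ(ρ) + (1 - λ(ρ))`. For multisets, weak
majorization `s ≺_w t` says that every `k`-element submultiset of `s` is outweighed by some
`k`-element submultiset of `t`; for sorted vectors this is the partial-sum inequality. The relation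
is additive under multiset union, and when sizes and total sums agree it passes to the images under
`x ↦ 1 - x`, by applying it to complements. Hence `λ(ρ_Ψ) ≺ λ(ρ_Φ)` yields
`λ(D_Ψ) ≺_w λ(D_Φ)`, while both total sums equal `n`.
-/

open Matrix
open scoped ComplexOrder

/-- Partial sum of the first `m` entries of a vector. -/
def pSum {N : ℕ} (x : Fin N → ℝ) (m : ℕ) : ℝ :=
  ∑ i : Fin N, if (i : ℕ) < m then x i else 0

/-- Majorization for (decreasingly sorted) vectors. -/
def Maj {N : ℕ} (x y : Fin N → ℝ) : Prop :=
  (∀ m : ℕ, pSum x m ≤ pSum y m) ∧ (∑ i, x i) = (∑ i, y i)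

/-- The extended 2n×2n single-particle density matrix D = ρ ⊕ (1 − ρᵀ). -/
def extD {n : ℕ} (ρ : Matrix (Fin n) (Fin n) ℂ) :
    Matrix (Fin n ⊕ Fin n) (Fin n ⊕ Fin n) ℂ :=
  Matrix.fromBlocks ρ 0 0 (1 - ρᵀ)

open Finset Multiset

theorem Multiset.exists_le_map_eq_of_le_map {α β : Type*} [DecidableEq α] [DecidableEq β]
    (f : α → β) {u : Multiset β} {s : Multiset α} (h : u ≤ s.map f) : ∃ t ≤ s, t.map f = u := by
  induction u using Multiset.induction generalizing s with
  | empty => exact ⟨0, zero_le _, rfl⟩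
  | cons b u ih =>
    obtain ⟨a, ha, rfl⟩ := mem_map.mp (mem_of_le h (mem_cons_self _ _))
    have hu : u ≤ (s.erase a).map f := by
      simpa [map_erase_of_mem f _ ha] using erase_le_erase (f a) h
    obtain ⟨t, ht, rfl⟩ := ih hu
    exact ⟨a ::ₘ t, (cons_le_cons a ht).trans (cons_erase ha).le, map_cons f a t⟩

theorem Multiset.exists_le_le_add_eq_of_le_add {α : Type*} [DecidableEq α]
    {u s t : Multiset α} (h : u ≤ s + t) : ∃ u₁ ≤ s, ∃ u₂ ≤ t, u₁ + u₂ = u := by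
  refine ⟨u ∩ s, inter_le_right, u - s, by rwa [Multiset.sub_le_iff_le_add, add_comm], ?_⟩
  ext a
  rw [count_add, count_inter, count_sub]
  omega

theorem Multiset.sum_map_const_sub {α : Type*} [AddCommGroup α] (c : α) (s : Multiset α) :
    (s.map (c - ·)).sum = card s • c - s.sum := by
  rw [sum_map_sub, map_const', sum_replicate, map_id']

theorem Multiset.map_univ_val_eq_of_comp_equiv {ι κ β : Type*} [Fintype ι] [Fintype κ]
    {x : ι → β} {y : κ → β} (e : ι ≃ κ) (h : ∀ i, x i = y (e i)) :
    univ.val.map x = univ.val.map y := by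
  rw [show x = y ∘ e from funext h, ← Multiset.map_map, map_univ_val_equiv]

section WeakMaj

variable {α : Type*}

def WeakMaj [AddCommMonoid α] [LE α] (s t : Multiset α) : Prop :=
  ∀ u ≤ s, ∃ v ≤ t, card v = card u ∧ u.sum ≤ v.sum

theorem WeakMaj.add [AddCommMonoid α] [PartialOrder α] [IsOrderedAddMonoid α] [DecidableEq α]
    {s t s' t' : Multiset α} (h : WeakMaj s t) (h' : WeakMaj s' t') :
    WeakMaj (s + s') (t + t') := by
  intro u hu
  obtain ⟨u₁, hu₁, u₂, hu₂, rfl⟩ := exists_le_le_add_eq_of_le_add hu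
  obtain ⟨v₁, hv₁, hcard₁, hsum₁⟩ := h u₁ hu₁
  obtain ⟨v₂, hv₂, hcard₂, hsum₂⟩ := h' u₂ hu₂
  refine ⟨v₁ + v₂, add_le_add hv₁ hv₂, by simp [hcard₁, hcard₂], ?_⟩
  simpa only [sum_add] using add_le_add hsum₁ hsum₂

theorem WeakMaj.map_const_sub [AddCommGroup α] [PartialOrder α] [IsOrderedAddMonoid α]
    [DecidableEq α] {s t : Multiset α} (h : WeakMaj s t) (hcard : card s = card t)
    (hsum : s.sum = t.sum) (c : α) : WeakMaj (s.map (c - ·)) (t.map (c - ·)) := by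
  have hinv : ∀ r : Multiset α, (r.map (c - ·)).map (c - ·) = r := fun r => by
    simp [Multiset.map_map]
  intro u hu
  obtain ⟨w, hw, rfl⟩ : ∃ w ≤ s, w.map (c - ·) = u :=
    ⟨u.map (c - ·), by simpa only [hinv] using map_le_map (f := (c - ·)) hu, hinv u⟩
  -- `s - w` is outweighed by some `v ≤ t`, so `w` outweighs `t - v`
  obtain ⟨v, hv, hvcard, hvsum⟩ := h (s - w) (Multiset.sub_le_self _ _)
  have hcard' : card (t - v) = card w := by
    have := card_le_card hw
    rw [card_sub hv, hvcard, card_sub hw]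
    omega
  have hsum' : (t - v).sum ≤ w.sum := by
    have hs := congrArg Multiset.sum (Multiset.sub_add_cancel hw)
    have ht := congrArg Multiset.sum (Multiset.sub_add_cancel hv)
    rw [sum_add] at hs ht
    rw [← add_le_add_iff_right v.sum, ht, ← hsum, ← hs, add_comm]
    exact add_le_add_right hvsum _
  refine ⟨(t - v).map (c - ·), map_le_map (Multiset.sub_le_self _ _), ?_, ?_⟩
  · rw [Multiset.card_map, Multiset.card_map, hcard']
  · rw [sum_map_const_sub, sum_map_const_sub, hcard']
    exact sub_le_sub_left hsum' _

end WeakMaj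

section PartialSums

variable {N : ℕ}

theorem pSum_min (x : Fin N → ℝ) (m : ℕ) : pSum x (min N m) = pSum x m := by
  unfold pSum
  congr! 2 with i
  simp [i.isLt]

theorem exists_le_map_card_sum_eq_pSum (x : Fin N → ℝ) (m : ℕ) :
    ∃ u ≤ univ.val.map x, card u = min N m ∧ u.sum = pSum x m := by
  refine ⟨(univ.filter fun i : Fin N => (i : ℕ) < m).val.map x,
    map_le_map (val_le_iff.mpr (Finset.filter_subset _ _)), ?_, ?_⟩
  · rw [Multiset.card_map, ← Finset.card_def, Fin.card_filter_val_lt]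
  · rw [pSum, ← Finset.sum_filter]
    rfl

theorem sum_le_pSum_card {x : Fin N → ℝ} (hx : Antitone x) (A : Finset (Fin N)) :
    ∑ i ∈ A, x i ≤ pSum x #A := by
  rcases A.eq_empty_or_nonempty with rfl | hA
  · simp [pSum]
  set F := univ.filter fun i : Fin N => (i : ℕ) < #A
  have hAN : #A ≤ N := by simpa using card_le_univ A
  have hF : #F = #A := by rw [Fin.card_filter_val_lt, min_eq_right hAN]
  -- every index in `A \ F` comes after every index in `F \ A`, so `x (#A - 1)` separates them
  set t := x ⟨#A - 1, by have := hA.card_pos; omega⟩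
  rw [pSum, ← Finset.sum_filter, ← sum_sdiff_le_sum_sdiff]
  calc ∑ i ∈ A \ F, x i ≤ #(A \ F) • t := by
        refine sum_le_card_nsmul _ _ _ fun i hi => hx ?_
        simp only [F, Finset.mem_sdiff, Finset.mem_filter, Finset.mem_univ, true_and,
          not_lt] at hi
        show #A - 1 ≤ (i : ℕ)
        omega
    _ = #(F \ A) • t := by rw [card_sdiff_comm hF.symm]
    _ ≤ ∑ i ∈ F \ A, x i := by
        refine card_nsmul_le_sum _ _ _ fun i hi => hx ?_
        simp only [F, Finset.mem_sdiff, Finset.mem_filter, Finset.mem_univ, true_and] at hi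
        show (i : ℕ) ≤ #A - 1
        omega

theorem sum_le_pSum_card_of_le_map {x : Fin N → ℝ} (hx : Antitone x) {u : Multiset ℝ}
    (hu : u ≤ univ.val.map x) : u.sum ≤ pSum x (card u) := by
  classical
  obtain ⟨s, hs, rfl⟩ := exists_le_map_eq_of_le_map x hu
  rw [Multiset.card_map]
  exact sum_le_pSum_card hx ⟨s, nodup_of_le hs univ.nodup⟩

theorem weakMaj_of_pSum_le {x y : Fin N → ℝ} (hx : Antitone x) (h : ∀ m, pSum x m ≤ pSum y m) :
    WeakMaj (univ.val.map x) (univ.val.map y) := by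
  intro u hu
  obtain ⟨v, hv, hvcard, hvsum⟩ := exists_le_map_card_sum_eq_pSum y (card u)
  refine ⟨v, hv, ?_, hvsum ▸ (sum_le_pSum_card_of_le_map hx hu).trans (h _)⟩
  have := card_le_card hu
  rw [Multiset.card_map, card_val, card_univ, Fintype.card_fin] at this
  omega

theorem pSum_le_of_weakMaj {x y : Fin N → ℝ} (hy : Antitone y)
    (h : WeakMaj (univ.val.map x) (univ.val.map y)) (m : ℕ) : pSum x m ≤ pSum y m := by
  obtain ⟨u, hu, hucard, husum⟩ := exists_le_map_card_sum_eq_pSum x m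
  obtain ⟨v, hv, hvcard, hvsum⟩ := h u hu
  calc pSum x m = u.sum := husum.symm
    _ ≤ v.sum := hvsum
    _ ≤ pSum y m := by
      rw [← pSum_min, ← hucard, ← hvcard]
      exact sum_le_pSum_card_of_le_map hy hv

end PartialSums

theorem maj_of_map_eq_add_map_one_sub {n M : ℕ} {a b : Fin n → ℝ} {x y : Fin M → ℝ}
    (ha : Antitone a) (hy : Antitone y) (hab : Maj a b)
    (hx : univ.val.map x = univ.val.map a + (univ.val.map a).map (1 - ·))
    (hy' : univ.val.map y = univ.val.map b + (univ.val.map b).map (1 - ·)) : Maj x y := by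
  have hsum : (univ.val.map a).sum = (univ.val.map b).sum := hab.2
  have hw := weakMaj_of_pSum_le ha hab.1
  have hw' := hw.map_const_sub (by simp only [Multiset.card_map]) hsum 1
  refine ⟨pSum_le_of_weakMaj hy (hx ▸ hy' ▸ hw.add hw'), ?_⟩
  rw [sum_eq_multiset_sum, sum_eq_multiset_sum, hx, hy', sum_add, sum_add, sum_map_const_sub,
    sum_map_const_sub, hsum, Multiset.card_map, Multiset.card_map]

open Polynomial in
theorem Matrix.IsHermitian.roots_charpoly_one_sub {ι 𝕜 : Type*} [RCLike 𝕜] [Fintype ι]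
    [DecidableEq ι] {A : Matrix ι ι 𝕜} (hA : A.IsHermitian) :
    (1 - A).charpoly.roots = univ.val.map fun i => ((1 - hA.eigenvalues i : ℝ) : 𝕜) := by
  have hcfc : cfc (fun x : ℝ => 1 - x) A = 1 - A := by
    rw [cfc_sub (fun _ : ℝ => (1 : ℝ)) (fun x : ℝ => x) A, cfc_const_one ℝ A, cfc_id' ℝ A]
  rw [← hcfc, hA.charpoly_cfc_eq,
    roots_prod _ _ (Finset.prod_ne_zero_iff.mpr fun i _ => X_sub_C_ne_zero _)]
  simp only [roots_X_sub_C, bind_singleton]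

open Polynomial in
theorem map_eigenvalues_extD {n : ℕ} {ρ : Matrix (Fin n) (Fin n) ℂ} (hρ : ρ.IsHermitian)
    (hD : (extD ρ).IsHermitian) :
    univ.val.map hD.eigenvalues =
      univ.val.map hρ.eigenvalues + (univ.val.map hρ.eigenvalues).map (1 - ·) := by
  have hchar : (extD ρ).charpoly = ρ.charpoly * (1 - ρ).charpoly := by
    rw [extD, charpoly_fromBlocks_zero₂₁, ← transpose_one, ← transpose_sub, charpoly_transpose,
      transpose_one]
  have hroots := congrArg roots hchar
  rw [roots_mul (mul_ne_zero (charpoly_monic _).ne_zero (charpoly_monic _).ne_zero),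
    hD.roots_charpoly_eq_eigenvalues, hρ.roots_charpoly_eq_eigenvalues,
    hρ.roots_charpoly_one_sub] at hroots
  apply Multiset.map_injective Complex.ofReal_injective
  rw [Multiset.map_add, Multiset.map_map, Multiset.map_map, Multiset.map_map, Multiset.map_map]
  exact hroots

theorem extended_majorization_general {n : ℕ} (ρΨ ρΦ : Matrix (Fin n) (Fin n) ℂ)
    (hΨ : ρΨ.IsHermitian) (hΦ : ρΦ.IsHermitian)
    (hDΨ : (extD ρΨ).IsHermitian) (hDΦ : (extD ρΦ).IsHermitian)
    (lamΨ lamΦ : Fin n → ℝ)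
    (hlamΨ : Antitone lamΨ ∧ ∃ σ : Equiv.Perm (Fin n), ∀ i, lamΨ i = hΨ.eigenvalues (σ i))
    (hlamΦ : Antitone lamΦ ∧ ∃ σ : Equiv.Perm (Fin n), ∀ i, lamΦ i = hΦ.eigenvalues (σ i))
    (hmaj : Maj lamΨ lamΦ)
    (dΨ dΦ : Fin (2 * n) → ℝ)
    (hdΨ : Antitone dΨ ∧ ∃ e : Fin (2 * n) ≃ (Fin n ⊕ Fin n), ∀ i, dΨ i = hDΨ.eigenvalues (e i))
    (hdΦ : Antitone dΦ ∧ ∃ e : Fin (2 * n) ≃ (Fin n ⊕ Fin n), ∀ i, dΦ i = hDΦ.eigenvalues (e i)) :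
    Maj dΨ dΦ := by
  obtain ⟨hlamΨ_anti, σΨ, hσΨ⟩ := hlamΨ
  obtain ⟨-, σΦ, hσΦ⟩ := hlamΦ
  obtain ⟨-, eΨ, heΨ⟩ := hdΨ
  obtain ⟨hdΦ_anti, eΦ, heΦ⟩ := hdΦ
  refine maj_of_map_eq_add_map_one_sub hlamΨ_anti hdΦ_anti hmaj ?_ ?_
  · rw [map_univ_val_eq_of_comp_equiv eΨ heΨ, map_eigenvalues_extD hΨ hDΨ,
      map_univ_val_eq_of_comp_equiv σΨ hσΨ]
  · rw [map_univ_val_eq_of_comp_equiv eΦ heΦ, map_eigenvalues_extD hΦ hDΦ,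
      map_univ_val_eq_of_comp_equiv σΦ hσΦ]

/-- If λ(ρ_Ψ) ≺ λ(ρ_Φ) for Hermitian matrices with eigenvalues in [0,1] and equal
trace, then λ(D_Ψ) ≺ λ(D_Φ) for the extended matrices D = ρ ⊕ (1 − ρᵀ). -/
theorem extended_majorization {n : ℕ} (ρΨ ρΦ : Matrix (Fin n) (Fin n) ℂ)
    (hΨ : ρΨ.IsHermitian) (hΦ : ρΦ.IsHermitian)
    (hΨ0 : ρΨ.PosSemidef) (hΨ1 : (1 - ρΨ).PosSemidef)
    (hΦ0 : ρΦ.PosSemidef) (hΦ1 : (1 - ρΦ).PosSemidef)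
    (htr : ρΨ.trace = ρΦ.trace)
    (hDΨ : (extD ρΨ).IsHermitian) (hDΦ : (extD ρΦ).IsHermitian)
    (lamΨ lamΦ : Fin n → ℝ)
    (hlamΨ : Antitone lamΨ ∧ ∃ σ : Equiv.Perm (Fin n), ∀ i, lamΨ i = hΨ.eigenvalues (σ i))
    (hlamΦ : Antitone lamΦ ∧ ∃ σ : Equiv.Perm (Fin n), ∀ i, lamΦ i = hΦ.eigenvalues (σ i))
    (hmaj : Maj lamΨ lamΦ)
    (dΨ dΦ : Fin (2 * n) → ℝ)
    (hdΨ : Antitone dΨ ∧ ∃ e : Fin (2 * n) ≃ (Fin n ⊕ Fin n), ∀ i, dΨ i = hDΨ.eigenvalues (e i))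
    (hdΦ : Antitone dΦ ∧ ∃ e : Fin (2 * n) ≃ (Fin n ⊕ Fin n), ∀ i, dΦ i = hDΦ.eigenvalues (e i)) :
    Maj dΨ dΦ :=
  extended_majorization_general ρΨ ρΦ hΨ hΦ hDΨ hDΦ lamΨ lamΦ hlamΨ hlamΦ hmaj dΨ dΦ hdΨ hdΦ
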